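/- For every integer r \ge 1 and all complex numbers T and t, one has \sum_{k=1}^{2r} \alpha_{r,k}(t) \binom{T+k-1}{k-1} = 4\bigl(T+\tfrac{1}{2}\bigr)\Bigl(t^2 - \bigl(T+\tfrac{1}{2}\bigr)^2\Bigr)^{r-1}, where \binom{T+k-1}{k-1} := \frac{(T+1)(T+2)\cdots(T+k-1)}{(k-1)!}. -/

import Mathlib

/-- `c_{r,j}(z) = ∑_{l=0}^{j-1} C(j-1,l) (-1)^l (z-l-1)^{r-1}`. -/
noncomputable def ccoef (r j : ℕ) (z : ℂ) : ℂ :=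
  ∑ l ∈ Finset.range j, ((j - 1).choose l : ℂ) * (-1 : ℂ) ^ l * (z - l - 1) ^ (r - 1)

/-- `α_{r,j}(t) = 4 ∑_{ℓ=⌊(j+1)/2⌋}^{r} C(r-1,ℓ-1) (-1)^{ℓ-1} c_{2ℓ,j}(1/2) t^{2r-2ℓ}`. -/
noncomputable def alphaCoef (r j : ℕ) (t : ℂ) : ℂ :=
  4 * ∑ ℓ ∈ Finset.Icc ((j + 1) / 2) r,
    ((r - 1).choose (ℓ - 1) : ℂ) * (-1 : ℂ) ^ (ℓ - 1) * ccoef (2 * ℓ) j (1 / 2) *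
      t ^ (2 * r - 2 * ℓ)

/-- The generalized binomial coefficient `binom(T+n, n) = ∏_{i=1}^{n} (T+i) / n!`. -/
noncomputable def gbinom (T : ℂ) (n : ℕ) : ℂ :=
  (∏ i ∈ Finset.range n, (T + i + 1)) / (n.factorial : ℂ)

/-!
In Mathlib's notation `Δ_[1] ^[j] f (w - j)` is the `j`-th backward difference of `f` at `w`,
and `c_{n+1,j+1}(z)` is the `j`-th backward difference of `x ↦ x ^ n` at `z - 1`. Newton's
backward interpolation formula, proved for monomials by induction on the degree from the Leibniz
rule `Δ^{m+1}(x g)(y) = y Δ^{m+1} g(y) + (m+1) Δ^m g(y+1)`, gives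
`∑_{k=1}^{N} c_{n+1,k}(z) binom(T+k-1,k-1) = (T+z)^n` for `n < N`, and the differences of order
above `n` vanish. So the extra terms `2ℓ < k` in `α_{r,k}` are zero, and after swapping the sums the
left side becomes `4 ∑_ℓ binom(r-1,ℓ-1) (-1)^{ℓ-1} t^{2r-2ℓ} (T+1/2)^{2ℓ-1}`, which the binomial
theorem sums to `4 (T+1/2) (t^2-(T+1/2)^2)^{r-1}`.
-/

open Finset fwdDiff

theorem fwdDiff_iter_succ_mul_self {R : Type*} [CommRing R] (g : R → R) (m : ℕ) (y : R) :
    Δ_[1] ^[m + 1] (fun x ↦ x * g x) y =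
      y * Δ_[1] ^[m + 1] g y + (m + 1) * Δ_[1] ^[m] g (y + 1) := by
  induction m generalizing y with
  | zero => simp only [zero_add, Function.iterate_one, Function.iterate_zero_apply, fwdDiff]; ring
  | succ m ih =>
    rw [Function.iterate_succ_apply', fwdDiff, ih, ih]
    simp only [Function.iterate_succ_apply', fwdDiff]
    push_cast
    ring_nf

theorem ccoef_succ_succ_eq_fwdDiff_iter (n j : ℕ) (z : ℂ) :
    ccoef (n + 1) (j + 1) z = Δ_[1] ^[j] (· ^ n) (z - 1 - j) := by
  rw [fwdDiff_iter_eq_sum_shift, ccoef, ← sum_range_reflect]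
  refine sum_congr rfl fun l hl ↦ ?_
  have hl : l ≤ j := Nat.lt_succ_iff.mp (mem_range.mp hl)
  simp only [Nat.add_sub_cancel]
  rw [Nat.choose_symm hl]
  simp only [zsmul_eq_mul, nsmul_eq_mul, Nat.cast_sub hl]
  push_cast
  ring

theorem ccoef_succ_succ_eq_zero_of_lt {n j : ℕ} (h : n < j) (z : ℂ) :
    ccoef (n + 1) (j + 1) z = 0 := by
  rw [ccoef_succ_succ_eq_fwdDiff_iter, fwdDiff_iter_pow_eq_zero_of_lt h, Pi.zero_apply]

theorem succ_mul_gbinom_succ (T : ℂ) (m : ℕ) :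
    (m + 1) * gbinom T (m + 1) = (T + m + 1) * gbinom T m := by
  rw [gbinom, gbinom, prod_range_succ, Nat.factorial_succ, Nat.cast_mul]
  field_simp
  push_cast
  ring

theorem sum_fwdDiff_iter_pow_mul_gbinom (w T : ℂ) {n N : ℕ} (h : n < N) :
    ∑ j ∈ range N, Δ_[1] ^[j] (· ^ n) (w - j) * gbinom T j = (T + w + 1) ^ n := by
  induction n generalizing N with
  | zero =>
    rw [sum_eq_single_of_mem 0 (mem_range.2 h)]
    · simp [gbinom]
    · intro j _ hj
      rw [fwdDiff_iter_pow_eq_zero_of_lt (Nat.pos_of_ne_zero hj), Pi.zero_apply, zero_mul]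
  | succ n ih =>
    obtain ⟨M, rfl⟩ : ∃ M, N = M + 1 := ⟨N - 1, by omega⟩
    have hM : n < M := by omega
    set D : ℕ → ℂ := fun j ↦ Δ_[1] ^[j] (· ^ n) (w - j)
    have hDM : D M = 0 := by simp [D, fwdDiff_iter_pow_eq_zero_of_lt hM]
    have leibniz (i : ℕ) : Δ_[1] ^[i + 1] (· ^ (n + 1)) (w - (i + 1 : ℕ)) =
        (w - (i + 1 : ℕ)) * D (i + 1) + (i + 1) * D i := by
      simp only [pow_succ', fwdDiff_iter_succ_mul_self, D]
      push_cast
      ring_nf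
    calc ∑ j ∈ range (M + 1), Δ_[1] ^[j] (· ^ (n + 1)) (w - j) * gbinom T j
        = ∑ j ∈ range (M + 1), (w - j) * D j * gbinom T j +
            ∑ i ∈ range M, (T + i + 1) * D i * gbinom T i := by
          have step (i : ℕ) : Δ_[1] ^[i + 1] (· ^ (n + 1)) (w - (i + 1 : ℕ)) * gbinom T (i + 1) =
              (w - (i + 1 : ℕ)) * D (i + 1) * gbinom T (i + 1) +
                (T + i + 1) * D i * gbinom T i := by
            rw [leibniz]
            linear_combination D i * succ_mul_gbinom_succ T i
          have base : Δ_[1] ^[0] (· ^ (n + 1)) (w - (0 : ℕ)) = (w - (0 : ℕ)) * D 0 := by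
            simp only [Function.iterate_zero_apply, D, pow_succ']
          rw [sum_range_succ', sum_range_succ' (fun j ↦ (w - j) * D j * gbinom T j)]
          simp only [step, base, sum_add_distrib]
          ring
      _ = ∑ j ∈ range M, (T + w + 1) * (D j * gbinom T j) := by
          rw [sum_range_succ, hDM, mul_zero, zero_mul, add_zero, ← sum_add_distrib]
          exact sum_congr rfl fun j _ ↦ by ring
      _ = (T + w + 1) ^ (n + 1) := by rw [← mul_sum, ih hM, pow_succ']

theorem sum_ccoef_mul_gbinom {n N : ℕ} (h : n < N) (z T : ℂ) :
    ∑ k ∈ Icc 1 N, ccoef (n + 1) k z * gbinom T (k - 1) = (T + z) ^ n := by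
  rw [← Ico_add_one_right_eq_Icc, sum_Ico_eq_sum_range, Nat.add_sub_cancel]
  simp only [add_comm 1, Nat.add_sub_cancel, ccoef_succ_succ_eq_fwdDiff_iter]
  have newton := sum_fwdDiff_iter_pow_mul_gbinom (z - 1) T h
  rwa [add_assoc, sub_add_cancel] at newton

theorem alphaCoef_eq_sum_Icc_one {r k : ℕ} (hk : 1 ≤ k) (t : ℂ) :
    alphaCoef r k t = 4 * ∑ ℓ ∈ Icc 1 r,
      ((r - 1).choose (ℓ - 1) : ℂ) * (-1 : ℂ) ^ (ℓ - 1) * ccoef (2 * ℓ) k (1 / 2) *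
        t ^ (2 * r - 2 * ℓ) := by
  rw [alphaCoef]
  congr 1
  refine sum_subset (Icc_subset_Icc_left (by omega)) fun ℓ hℓ hℓ' ↦ ?_
  simp only [mem_Icc, not_and, not_le] at hℓ hℓ'
  obtain ⟨j, rfl⟩ : ∃ j, k = j + 1 := ⟨k - 1, by omega⟩
  obtain ⟨m, rfl⟩ : ∃ m, ℓ = m + 1 := ⟨ℓ - 1, by omega⟩
  rw [show 2 * (m + 1) = (2 * m + 1) + 1 by ring, ccoef_succ_succ_eq_zero_of_lt (by omega),
    mul_zero, zero_mul]

theorem sum_Icc_choose_mul_pow {R : Type*} [CommRing R] (s : ℕ) (x t : R) :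
    ∑ ℓ ∈ Icc 1 (s + 1), (s.choose (ℓ - 1) : R) * (-1) ^ (ℓ - 1) * t ^ (2 * (s + 1) - 2 * ℓ) *
      x ^ (2 * ℓ - 1) = x * (t ^ 2 - x ^ 2) ^ s := by
  rw [← Ico_add_one_right_eq_Icc, sum_Ico_eq_sum_range, sub_eq_neg_add, add_pow, mul_sum]
  refine sum_congr (by simp) fun i hi ↦ ?_
  have hi : i ≤ s := by simpa [Nat.lt_succ_iff] using hi
  rw [show 2 * (s + 1) - 2 * (1 + i) = 2 * (s - i) by omega,
    show 2 * (1 + i) - 1 = 2 * i + 1 by omega, add_tsub_cancel_left, neg_pow (x ^ 2), ← pow_mul, pow_mul t]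
  ring

theorem statement10 (r : ℕ) (hr : 1 ≤ r) (T t : ℂ) :
    ∑ k ∈ Finset.Icc 1 (2 * r), alphaCoef r k t * gbinom T (k - 1) =
      4 * (T + 1 / 2) * (t ^ 2 - (T + 1 / 2) ^ 2) ^ (r - 1) := by
  obtain ⟨s, rfl⟩ : ∃ s, r = s + 1 := ⟨r - 1, by omega⟩
  calc ∑ k ∈ Icc 1 (2 * (s + 1)), alphaCoef (s + 1) k t * gbinom T (k - 1)
      = 4 * ∑ ℓ ∈ Icc 1 (s + 1), (s.choose (ℓ - 1) : ℂ) * (-1) ^ (ℓ - 1) *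
          t ^ (2 * (s + 1) - 2 * ℓ) *
          ∑ k ∈ Icc 1 (2 * (s + 1)), ccoef (2 * ℓ) k (1 / 2) * gbinom T (k - 1) := by
        rw [sum_congr rfl fun k hk ↦ by rw [alphaCoef_eq_sum_Icc_one (mem_Icc.1 hk).1]]
        simp only [Nat.add_sub_cancel, mul_sum, sum_mul]
        rw [sum_comm]
        exact sum_congr rfl fun ℓ _ ↦ sum_congr rfl fun k _ ↦ by ring
    _ = 4 * ∑ ℓ ∈ Icc 1 (s + 1), (s.choose (ℓ - 1) : ℂ) * (-1) ^ (ℓ - 1) *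
          t ^ (2 * (s + 1) - 2 * ℓ) * (T + 1 / 2) ^ (2 * ℓ - 1) := by
        congr 1
        refine sum_congr rfl fun ℓ hℓ ↦ ?_
        have hℓ := mem_Icc.1 hℓ
        rw [show 2 * ℓ = (2 * ℓ - 1) + 1 by omega, sum_ccoef_mul_gbinom (by omega),
          Nat.add_sub_cancel]
    _ = 4 * (T + 1 / 2) * (t ^ 2 - (T + 1 / 2) ^ 2) ^ (s + 1 - 1) := by
        rw [sum_Icc_choose_mul_pow, Nat.add_sub_cancel, mul_assoc]
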